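/- Let φ(x) = x(x+1)(2x+1)/6 and ψ(x) = x(x+1)/2. Suppose (x_N^r, y_N^r) solves φ(x)+φ(y) = 2(d*/d)N², ψ(y)−ψ(x) = (c*/d)N, and (x_N, y_N) are integers with |x_N − x_N^r| ≤ 1/2 and |y_N − y_N^r| ≤ 1/2. Define d*_N = (d/(2N²))(φ(x_N)+φ(y_N)) and c*_N = (d/N)(ψ(y_N)−ψ(x_N)). Then there exists C > 0 with |d*_N − d*| ≤ C N^{−2/3} and |c*_N − c*| ≤ C N^{−1/3} for all sufficiently large N. -/

import Mathlib

noncomputable def phi (x : ℝ) : ℝ := x * (x + 1) * (2 * x + 1) / 6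
noncomputable def psi (x : ℝ) : ℝ := x * (x + 1) / 2

/-!
Put `s = N^{1/3}`. Since `y³ ≤ 6 φ(y)` for `y ≥ 0`, the defining equation
`φ(xᵣ) + φ(yᵣ) = 2(d*/d) s⁶` forces `0 ≤ xᵣ ≤ yᵣ ≤ K s²` for a constant `K ≥ 1`.
On `[0, M]` with `M ≥ 1`, moving the argument by at most `1/2` changes `φ` by `O(M²)` and
`ψ` by `O(M)`. Rounding therefore perturbs `φ(x) + φ(y)` by `O(s⁴)` and `ψ(y) - ψ(x)` by `O(s²)`;
after the normalisations `d/(2s⁶)` and `d/s³` this is `O(s⁻²) = O(N^{-2/3})` and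
`O(s⁻¹) = O(N^{-1/3})`.
-/

lemma pow_three_le_six_mul_phi {x : ℝ} (hx : 0 ≤ x) : x ^ 3 ≤ 6 * phi x := by
  unfold phi
  nlinarith [mul_nonneg hx hx]

lemma phi_nonneg {x : ℝ} (hx : 0 ≤ x) : 0 ≤ phi x := by
  nlinarith [pow_three_le_six_mul_phi hx, pow_nonneg hx 3]

lemma le_mul_sq_of_phi_add_phi_le {xr yr K s : ℝ} (hx : 0 ≤ xr) (hxy : xr ≤ yr) (hK : 1 ≤ K)
    (h : 6 * (phi xr + phi yr) ≤ K * s ^ 6) : yr ≤ K * s ^ 2 := by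
  have hy : 0 ≤ yr := hx.trans hxy
  have hK3 : K ≤ K ^ 3 := le_self_pow₀ hK three_ne_zero
  have hcube : yr ^ 3 ≤ (K * s ^ 2) ^ 3 :=
    calc yr ^ 3 ≤ 6 * (phi xr + phi yr) := by linarith [pow_three_le_six_mul_phi hy, phi_nonneg hx]
      _ ≤ K * s ^ 6 := h
      _ ≤ K ^ 3 * s ^ 6 := by gcongr
      _ = (K * s ^ 2) ^ 3 := by ring
  exact (pow_le_pow_iff_left₀ hy (by positivity) three_ne_zero).1 hcube

lemma abs_phi_sub_le {a b M : ℝ} (hab : |a - b| ≤ 1 / 2) (hb : 0 ≤ b) (hbM : b ≤ M)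
    (hM : 1 ≤ M) : |phi a - phi b| ≤ 2 * M ^ 2 := by
  have hdiff : phi a - phi b = (a - b) * (2 * (a ^ 2 + a * b + b ^ 2) + 3 * (a + b) + 1) / 6 := by
    unfold phi; ring
  obtain ⟨h1, h2⟩ := abs_le.1 hab
  have hfac : |2 * (a ^ 2 + a * b + b ^ 2) + 3 * (a + b) + 1| ≤ 24 * M ^ 2 := by
    rw [abs_le]; constructor <;> nlinarith
  rw [hdiff, abs_div, abs_mul, abs_of_pos (by norm_num : (0:ℝ) < 6)]
  nlinarith [mul_le_mul hab hfac (abs_nonneg _) (by norm_num)]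

lemma abs_psi_sub_le {a b M : ℝ} (hab : |a - b| ≤ 1 / 2) (hb : 0 ≤ b) (hbM : b ≤ M)
    (hM : 1 ≤ M) : |psi a - psi b| ≤ M := by
  rw [abs_le] at hab ⊢
  unfold psi
  constructor <;> nlinarith [sq_nonneg (a - b)]

lemma abs_phi_add_phi_sub_le {x y xr yr M : ℝ} (hM : 1 ≤ M) (hx : 0 ≤ xr) (hxy : xr ≤ yr)
    (hyM : yr ≤ M) (hxn : |x - xr| ≤ 1 / 2) (hyn : |y - yr| ≤ 1 / 2) :
    |(phi x + phi y) - (phi xr + phi yr)| ≤ 4 * M ^ 2 := by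
  have := abs_phi_sub_le hxn hx (hxy.trans hyM) hM
  have := abs_phi_sub_le hyn (hx.trans hxy) hyM hM
  calc _ = |(phi x - phi xr) + (phi y - phi yr)| := by ring_nf
    _ ≤ _ := (abs_add_le _ _).trans (by linarith)

lemma abs_psi_sub_psi_sub_le {x y xr yr M : ℝ} (hM : 1 ≤ M) (hx : 0 ≤ xr) (hxy : xr ≤ yr)
    (hyM : yr ≤ M) (hxn : |x - xr| ≤ 1 / 2) (hyn : |y - yr| ≤ 1 / 2) :
    |(psi y - psi x) - (psi yr - psi xr)| ≤ 2 * M := by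
  have := abs_psi_sub_le hxn hx (hxy.trans hyM) hM
  have := abs_psi_sub_le hyn (hx.trans hxy) hyM hM
  calc _ = |(psi y - psi yr) - (psi x - psi xr)| := by ring_nf
    _ ≤ _ := (abs_sub _ _).trans (by linarith)

lemma exists_cube_root_rpow {n : ℝ} (hn : 1 ≤ n) :
    ∃ s : ℝ, 1 ≤ s ∧ n = s ^ 3 ∧ n ^ (-(2 : ℝ) / 3) = (s ^ 2)⁻¹ ∧ n ^ (-(1 : ℝ) / 3) = s⁻¹ := by
  have hn0 : 0 ≤ n := zero_le_one.trans hn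
  refine ⟨n ^ ((1 : ℝ) / 3), Real.one_le_rpow hn (by norm_num), ?_, ?_, ?_⟩
  · rw [← Real.rpow_mul_natCast hn0]; norm_num
  · rw [← Real.rpow_mul_natCast hn0, ← Real.rpow_neg hn0]; norm_num
  · rw [← Real.rpow_neg hn0]; norm_num

lemma abs_normalized_phi_sub_le {d dstar s K P P₀ : ℝ} (hd : 0 < d) (hs : 0 < s)
    (hP : |P - P₀| ≤ 4 * (K * s ^ 2) ^ 2) (hP₀ : P₀ = 2 * (dstar / d) * (s ^ 3) ^ 2) :
    |d / (2 * (s ^ 3) ^ 2) * P - dstar| ≤ 2 * d * K ^ 2 * (s ^ 2)⁻¹ := by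
  have hdstar : dstar = d / (2 * (s ^ 3) ^ 2) * P₀ := by rw [hP₀]; field_simp
  calc |d / (2 * (s ^ 3) ^ 2) * P - dstar| = d / (2 * (s ^ 3) ^ 2) * |P - P₀| := by
        rw [hdstar, ← mul_sub, abs_mul, abs_of_pos (by positivity)]
    _ ≤ d / (2 * (s ^ 3) ^ 2) * (4 * (K * s ^ 2) ^ 2) := by gcongr
    _ = 2 * d * K ^ 2 * (s ^ 2)⁻¹ := by field_simp; ring

lemma abs_normalized_psi_sub_le {d cstar s K Q Q₀ : ℝ} (hd : 0 < d) (hs : 0 < s)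
    (hQ : |Q - Q₀| ≤ 2 * (K * s ^ 2)) (hQ₀ : Q₀ = cstar / d * s ^ 3) :
    |d / s ^ 3 * Q - cstar| ≤ 2 * d * K * s⁻¹ := by
  have hcstar : cstar = d / s ^ 3 * Q₀ := by rw [hQ₀]; field_simp
  calc |d / s ^ 3 * Q - cstar| = d / s ^ 3 * |Q - Q₀| := by
        rw [hcstar, ← mul_sub, abs_mul, abs_of_pos (by positivity)]
    _ ≤ d / s ^ 3 * (2 * (K * s ^ 2)) := by gcongr
    _ = 2 * d * K * s⁻¹ := by field_simp

theorem perturbed_coefficients_estimate_general (d dstar cstar : ℝ)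
    (hd : 0 < d)
    (xr yr : ℕ → ℝ) (x y : ℕ → ℤ) (dstarN cstarN : ℕ → ℝ)
    (hsol : ∀ᶠ N : ℕ in Filter.atTop,
      0 ≤ xr N ∧ xr N < yr N ∧
      phi (xr N) + phi (yr N) = 2 * (dstar / d) * (N : ℝ) ^ 2 ∧
      psi (yr N) - psi (xr N) = (cstar / d) * (N : ℝ))
    (hxnear : ∀ N : ℕ, |(x N : ℝ) - xr N| ≤ 1 / 2)
    (hynear : ∀ N : ℕ, |(y N : ℝ) - yr N| ≤ 1 / 2)
    (hdstarN : ∀ N : ℕ, 1 ≤ N →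
      dstarN N = (d / (2 * (N : ℝ) ^ 2)) * (phi (x N) + phi (y N)))
    (hcstarN : ∀ N : ℕ, 1 ≤ N →
      cstarN N = (d / (N : ℝ)) * (psi (y N) - psi (x N))) :
    ∃ C > 0, ∀ᶠ N : ℕ in Filter.atTop,
      |dstarN N - dstar| ≤ C * (N : ℝ) ^ (-(2 : ℝ) / 3) ∧
      |cstarN N - cstar| ≤ C * (N : ℝ) ^ (-(1 : ℝ) / 3) := by
  set K := max 1 (12 * dstar / d)
  have hK : 1 ≤ K := le_max_left _ _
  refine ⟨2 * d * K ^ 2, by positivity, ?_⟩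
  filter_upwards [hsol, Filter.eventually_ge_atTop 1] with N ⟨hx0, hxy, hphi, hpsi⟩ hN
  obtain ⟨s, hs, hNs, hN2, hN1⟩ := exists_cube_root_rpow (Nat.one_le_cast.2 hN)
  rw [hN2, hN1, hdstarN N hN, hcstarN N hN, hNs]
  rw [hNs] at hphi hpsi
  have hs0 : 0 < s := zero_lt_one.trans_le hs
  have hyr : yr N ≤ K * s ^ 2 := by
    refine le_mul_sq_of_phi_add_phi_le hx0 hxy.le hK ?_
    calc 6 * (phi (xr N) + phi (yr N)) = 12 * dstar / d * s ^ 6 := by rw [hphi]; ring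
      _ ≤ K * s ^ 6 := by gcongr; exact le_max_right _ _
  have hM : 1 ≤ K * s ^ 2 := one_le_mul_of_one_le_of_one_le hK (one_le_pow₀ hs)
  refine ⟨abs_normalized_phi_sub_le hd hs0
    (abs_phi_add_phi_sub_le hM hx0 hxy.le hyr (hxnear N) (hynear N)) hphi, ?_⟩
  refine (abs_normalized_psi_sub_le hd hs0
    (abs_psi_sub_psi_sub_le hM hx0 hxy.le hyr (hxnear N) (hynear N)) hpsi).trans ?_
  gcongr
  exact le_self_pow₀ hK two_ne_zero

theorem perturbed_coefficients_estimate (d dstar cstar : ℝ)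
    (hd : 0 < d) (hdstar : 0 < dstar) (hcstar : 0 < cstar)
    (xr yr : ℕ → ℝ) (x y : ℕ → ℤ) (dstarN cstarN : ℕ → ℝ)
    (hsol : ∀ᶠ N : ℕ in Filter.atTop,
      0 ≤ xr N ∧ xr N < yr N ∧
      phi (xr N) + phi (yr N) = 2 * (dstar / d) * (N : ℝ) ^ 2 ∧
      psi (yr N) - psi (xr N) = (cstar / d) * (N : ℝ))
    (hxnear : ∀ N : ℕ, |(x N : ℝ) - xr N| ≤ 1 / 2)
    (hynear : ∀ N : ℕ, |(y N : ℝ) - yr N| ≤ 1 / 2)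
    (hdstarN : ∀ N : ℕ, 1 ≤ N →
      dstarN N = (d / (2 * (N : ℝ) ^ 2)) * (phi (x N) + phi (y N)))
    (hcstarN : ∀ N : ℕ, 1 ≤ N →
      cstarN N = (d / (N : ℝ)) * (psi (y N) - psi (x N))) :
    ∃ C > 0, ∀ᶠ N : ℕ in Filter.atTop,
      |dstarN N - dstar| ≤ C * (N : ℝ) ^ (-(2 : ℝ) / 3) ∧
      |cstarN N - cstar| ≤ C * (N : ℝ) ^ (-(1 : ℝ) / 3) :=
  perturbed_coefficients_estimate_general d dstar cstar hd xr yr x y dstarN cstarN hsol hxnear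
    hynear hdstarN hcstarN
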